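/- arXiv:1503.00139 — 2 statements merged into one kernel-verified Lean document; each statement's English description precedes it below -/
import Mathlib

section
/- Let G be a connected self-contained graph whose foundation is nonempty and finite. Then the foundation contains a vertex whose degree in G is infinite. -/
open SimpleGraph Function Set

/-- `s` is the vertex set of a removable subgraph of `G`: it is nonempty, proper,
and deleting it yields a graph isomorphic to `G`. -/
def IsRemovable {V : Type*} (G : SimpleGraph V) (s : Set V) : Prop :=
  s.Nonempty ∧ s ≠ Set.univ ∧ Nonempty (G ≃g (G.induce sᶜ))

/-- `G` is self-contained: isomorphic to a proper induced subgraph of itself. -/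
def SelfContained {V : Type*} (G : SimpleGraph V) : Prop :=
  ∃ t : Set V, t ≠ Set.univ ∧ Nonempty (G ≃g G.induce t)

/-- The vertex set of the foundation of `G`: vertices in no removable subgraph. -/
def FndSet {V : Type*} (G : SimpleGraph V) : Set V :=
  {v | ∀ s : Set V, IsRemovable G s → v ∉ s}

/-- The set of twisted vertices for a removable vertex set `h`. -/
def TorSet {V : Type*} (G : SimpleGraph V) (h : Set V) : Set V :=
  {v | (∃ s, IsRemovable G s ∧ v ∈ s) ∧
    ∃ hv : v ∈ hᶜ, (⟨v, hv⟩ : ↥hᶜ) ∈ FndSet (G.induce hᶜ)}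

/-!
A removable set `s` gives an embedding `ψ : G ↪g G` with range in `sᶜ`. Removable sets of
`G[sᶜ]` combine with `s` into removable sets of `G`, so `ψ` maps the foundation onto itself;
as the foundation is finite, some iterate `ψ^[n]`, `n > 0`, fixes it pointwise. If a vertex `v`
of the foundation had finite degree, `ψ^[n]` would permute its neighbourhood, so all neighbours
of `v` lie in the range of `ψ`, hence outside `s`. Thus the foundation would be closed under
adjacency; since `G` is connected and self-contained it is not all of `G`, a contradiction.
-/

theorem Set.BijOn.exists_iterate_eq_self {α : Type*} {f : α → α} {s : Set α} (hs : s.Finite)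
    (h : BijOn f s s) : ∃ n, 0 < n ∧ ∀ x ∈ s, f^[n] x = x := by
  have : Finite s := hs.to_subtype
  let e : Equiv.Perm s := Equiv.ofBijective _ h.bijective
  refine ⟨orderOf e, orderOf_pos e, fun x hx => ?_⟩
  have he : (e ^ orderOf e) ⟨x, hx⟩ = ⟨x, hx⟩ := by rw [pow_orderOf_eq_one]; rfl
  rw [Equiv.Perm.coe_pow, show ⇑e = h.mapsTo.restrict f s s from rfl,
    h.mapsTo.iterate_restrict] at he
  exact congrArg Subtype.val he

theorem Set.Finite.bijOn_of_subset_image {α : Type*} {f : α → α} {s : Set α} (hs : s.Finite)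
    (hf : InjOn f s) (h : s ⊆ f '' s) : BijOn f s s := by
  have himage : s = f '' s := eq_of_subset_of_ncard_le h hf.ncard_image.le (hs.image f)
  exact ⟨fun x hx => himage ▸ mem_image_of_mem f hx, hf, h⟩

theorem RelEmbedding.coe_pow {α : Type*} {r : α → α → Prop} (f : r ↪r r) (n : ℕ) :
    ⇑(f ^ n) = f^[n] := by
  induction n with
  | zero => rfl
  | succ n ih => rw [pow_succ, RelEmbedding.coe_mul, ih, iterate_succ]

namespace SimpleGraph

variable {V : Type*} {G : SimpleGraph V}

noncomputable def induceInduceIso (s : Set V) (t : Set s) :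
    (G.induce s).induce t ≃g G.induce (Subtype.val '' t) :=
  { Equiv.Set.image Subtype.val t Subtype.val_injective with
    map_rel_iff' := by simp }

theorem Embedding.neighborSet_subset_image_of_apply_eq (f : G ↪g G) {v : V} (hv : f v = v)
    (hfin : (G.neighborSet v).Finite) : G.neighborSet v ⊆ f '' G.neighborSet v := by
  have hmaps : MapsTo f (G.neighborSet v) (G.neighborSet v) := fun u hu => by
    simpa [hv] using f.map_adj_iff.mpr hu
  exact ((hfin.injOn_iff_bijOn_of_mapsTo hmaps).mp f.injective.injOn).surjOn

end SimpleGraph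

section Removable

variable {V W : Type*} {G : SimpleGraph V} {H : SimpleGraph W} {s : Set V}

theorem IsRemovable.image (e : G ≃g H) (hs : IsRemovable G s) : IsRemovable H (e '' s) := by
  obtain ⟨hne, huniv, ⟨φ⟩⟩ := hs
  refine ⟨hne.image e, ?_, ?_⟩
  · rwa [Ne, ← e.surjective.range_eq, ← image_univ, e.injective.image_injective.eq_iff]
  · have hbij : BijOn e sᶜ (e '' s)ᶜ := by
      rw [← image_compl_eq e.bijective]
      exact e.injective.injOn.bijOn_image
    exact ⟨(e.symm.trans φ).trans (e.induce hbij)⟩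

theorem IsRemovable.union_image_val (hs : IsRemovable G s) {r : Set ↥sᶜ}
    (hr : IsRemovable (G.induce sᶜ) r) : IsRemovable G (s ∪ Subtype.val '' r) := by
  obtain ⟨⟨x, hx⟩, -, ⟨φ⟩⟩ := hs
  obtain ⟨-, hruniv, ⟨ψ⟩⟩ := hr
  have hcompl : Subtype.val '' rᶜ = (s ∪ Subtype.val '' r)ᶜ := by
    rw [image_val_compl, compl_union, sdiff_eq]
  refine ⟨⟨x, Or.inl hx⟩, ?_, ⟨(φ.trans ψ).trans (hcompl ▸ induceInduceIso sᶜ rᶜ)⟩⟩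
  obtain ⟨y, hy⟩ := (ne_univ_iff_exists_notMem r).mp hruniv
  refine (ne_univ_iff_exists_notMem _).mpr ⟨y, ?_⟩
  rintro (hys | ⟨z, hz, hzy⟩)
  · exact y.2 hys
  · exact hy (Subtype.val_injective hzy ▸ hz)

theorem SimpleGraph.Iso.symm_mem_fndSet (e : G ≃g H) {w : W} (hw : w ∈ FndSet H) :
    e.symm w ∈ FndSet G :=
  fun s hs hws => hw (e '' s) (hs.image e) ⟨_, hws, e.apply_symm_apply w⟩

theorem IsRemovable.mem_fndSet_induce (hs : IsRemovable G s) {v : V} (hv : v ∈ FndSet G) :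
    (⟨v, hv s hs⟩ : ↥sᶜ) ∈ FndSet (G.induce sᶜ) :=
  fun _ hr hvr => hv _ (hs.union_image_val hr) (Or.inr ⟨_, hvr, rfl⟩)

theorem neighborSet_subset_fndSet (hfin : (FndSet G).Finite) {v : V} (hv : v ∈ FndSet G)
    (hdeg : (G.neighborSet v).Finite) : G.neighborSet v ⊆ FndSet G := by
  intro w hw s hs hws
  obtain ⟨φ⟩ := hs.2.2
  let ψ : G ↪g G := (Embedding.induce sᶜ).comp φ.toEmbedding
  have hψ : ∀ x, ψ x ∉ s := fun x => (φ x).2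
  have hsurj : FndSet G ⊆ ψ '' FndSet G := fun u hu =>
    ⟨φ.symm ⟨u, hu s hs⟩, φ.symm_mem_fndSet (hs.mem_fndSet_induce hu), by simp [ψ]⟩
  obtain ⟨n, hn, hfix⟩ :=
    (hfin.bijOn_of_subset_image ψ.injective.injOn hsurj).exists_iterate_eq_self hfin
  have hv_fixed : (ψ ^ n) v = v := by rw [RelEmbedding.coe_pow]; exact hfix v hv
  obtain ⟨u, -, rfl⟩ := (ψ ^ n).neighborSet_subset_image_of_apply_eq hv_fixed hdeg hw
  obtain ⟨m, rfl⟩ := Nat.exists_eq_succ_of_ne_zero hn.ne'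
  rw [RelEmbedding.coe_pow, iterate_succ_apply'] at hws
  exact hψ _ hws

theorem SelfContained.exists_isRemovable [Nonempty V] (hG : SelfContained G) :
    ∃ s, IsRemovable G s := by
  obtain ⟨t, ht, ⟨φ⟩⟩ := hG
  have ht_nonempty : t.Nonempty := ⟨_, (φ (Classical.arbitrary V)).2⟩
  exact ⟨tᶜ, nonempty_compl.mpr ht, compl_ne_univ.mpr ht_nonempty, ⟨(compl_compl t).symm ▸ φ⟩⟩

end Removable

theorem stmt8 {V : Type*} (G : SimpleGraph V) (hG : SelfContained G)
    (hc : G.Connected) (hne : (FndSet G).Nonempty) (hfin : (FndSet G).Finite) :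
    ∃ v ∈ FndSet G, (G.neighborSet v).Infinite := by
  by_contra! hdeg
  have : Nonempty V := hc.nonempty
  obtain ⟨s, hs⟩ := hG.exists_isRemovable
  obtain ⟨x, hx⟩ := hs.1
  obtain ⟨v, hv⟩ := hne
  obtain ⟨d, -, hd, hd'⟩ :=
    (hc.preconnected v x).some.exists_boundary_dart (FndSet G) hv (fun h => h s hs hx)
  exact hd' (neighborSet_subset_fndSet hfin hd (hdeg _ hd) d.adj)
end

section
/- Let G be a self-contained graph with empty foundation (every vertex lies in some removable subgraph). Then every removable subgraph of G is torsion-free, i.e., Tor_G(H) is empty for every removable subgraph H of G. -/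
open SimpleGraph Function Set

/-- An isomorphism restricts to an isomorphism of induced subgraphs on
corresponding sets. -/
noncomputable def isoInduceImage {V W : Type*} {G : SimpleGraph V} {G' : SimpleGraph W}
    (φ : G ≃g G') (t : Set V) : G.induce t ≃g G'.induce (φ '' t) where
  toEquiv := (φ.toEquiv.image t)
  map_rel_iff' := by
    rintro ⟨a, ha⟩ ⟨b, hb⟩
    simp [Equiv.image, SimpleGraph.comap, φ.map_rel_iff]

lemma isRemovable_map {V W : Type*} {G : SimpleGraph V} {G' : SimpleGraph W}
    (φ : G ≃g G') {s : Set V} (hs : IsRemovable G s) : IsRemovable G' (φ '' s) := by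
  obtain ⟨hne, hproper, ⟨ψ⟩⟩ := hs
  refine ⟨hne.image _, ?_, ?_⟩
  · intro h
    obtain ⟨x, hx⟩ := (Set.ne_univ_iff_exists_notMem s).mp hproper
    have : φ x ∈ φ '' s := h ▸ Set.mem_univ _
    obtain ⟨y, hy, hxy⟩ := this
    exact hx (φ.toEquiv.injective hxy ▸ hy)
  · have himg : φ '' sᶜ = (φ '' s)ᶜ := by
      apply Set.image_compl_eq φ.toEquiv.bijective
    refine ⟨(φ.symm.trans ψ).trans ?_⟩
    exact (himg ▸ isoInduceImage φ sᶜ : G.induce sᶜ ≃g G'.induce (φ '' s)ᶜ)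

lemma fndSet_empty_map {V W : Type*} {G : SimpleGraph V} {G' : SimpleGraph W}
    (φ : G ≃g G') (hf : FndSet G = ∅) : FndSet G' = ∅ := by
  ext w
  simp only [Set.mem_empty_iff_false, iff_false]
  intro hw
  have : φ.symm w ∈ FndSet G := by
    intro s hs hmem
    have := hw (φ '' s) (isRemovable_map φ hs)
    exact this ⟨φ.symm w, hmem, φ.apply_symm_apply w⟩
  simp [hf] at this

theorem stmt19 {V : Type*} (G : SimpleGraph V) (hG : SelfContained G)
    (hf : FndSet G = ∅) :
    ∀ h : Set V, IsRemovable G h → TorSet G h = ∅ := by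
  intro h hh
  obtain ⟨_, _, ⟨φ⟩⟩ := hh
  have hf' : FndSet (G.induce hᶜ) = ∅ := fndSet_empty_map φ hf
  ext v
  simp only [TorSet, Set.mem_setOf_eq, Set.mem_empty_iff_false, iff_false]
  rintro ⟨_, hv, hfnd⟩
  simp [hf'] at hfnd
end
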